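/- arXiv:0807.0383 — 3 statements merged into one kernel-verified Lean document; each statement's English description precedes it below -/
import Mathlib

section
/- Let λ be a partition of n, written as (λ_1,…,λ_n) with trailing zeros, and define A_λ(v) = (Π_{i=1}^n (v + λ_i + n − i)) / H_λ. Then for every integer v, A_λ(v) is an integer. -/
open Finset Polynomial

/-- The `i`-th part (0-indexed) of a partition of `n`, listed in weakly
decreasing order with trailing zeros (`λ_{i+1}` in the paper's 1-indexed notation). -/
def partFun {n : ℕ} (p : Nat.Partition n) (i : ℕ) : ℕ :=
  (p.parts.sort (· ≥ ·)).getD i 0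

/-- The cells `(i, j)` (0-indexed) of the Young diagram of `p`. -/
def cells {n : ℕ} (p : Nat.Partition n) : Finset (ℕ × ℕ) :=
  (Finset.range n ×ˢ Finset.range n).filter fun c => c.2 < partFun p c.1

/-- The content `j - i` of a (0-indexed) cell `(i, j)`. -/
def cellContent (c : ℕ × ℕ) : ℤ := (c.2 : ℤ) - (c.1 : ℤ)

/-- The `j`-th part (0-indexed) of the conjugate partition of `p`. -/
def conjFun {n : ℕ} (p : Nat.Partition n) (j : ℕ) : ℕ :=
  ((Finset.range n).filter fun i => j < partFun p i).card

/-- The hook length `λ_i - j + λ'_j - i + 1` (1-indexed) of the (0-indexed) cell `c` of `p`. -/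
def hook {n : ℕ} (p : Nat.Partition n) (c : ℕ × ℕ) : ℕ :=
  (partFun p c.1 - c.2) + (conjFun p c.2 - c.1) - 1

/-- A standard Young tableau of shape `p`, encoded as a bijective labelling of the
cells of `p` by `Fin n` that increases along rows and columns. -/
def IsSYT {n : ℕ} (p : Nat.Partition n) (T : {c : ℕ × ℕ // c ∈ cells p} → Fin n) : Prop :=
  Function.Bijective T ∧
    ∀ a b : {c : ℕ × ℕ // c ∈ cells p},
      ((a.1.1 = b.1.1 ∧ a.1.2 < b.1.2) ∨ (a.1.2 = b.1.2 ∧ a.1.1 < b.1.1)) → T a < T b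

/-- `f_λ`, the number of standard Young tableaux of shape `p`. -/
noncomputable def sytCount {n : ℕ} (p : Nat.Partition n) : ℕ :=
  Nat.card {T : {c : ℕ × ℕ // c ∈ cells p} → Fin n // IsSYT p T}

/-- The multiset `{c_u : u ∈ λ}` of contents of the cells of `p`, as rational numbers. -/
def contents {n : ℕ} (p : Nat.Partition n) : Multiset ℚ :=
  (cells p).val.map fun c => (cellContent c : ℚ)

/-- The multiset `{h_u² : u ∈ λ}` of squares of the hook lengths of the cells of `p`. -/
def hooksSq {n : ℕ} (p : Nat.Partition n) : Multiset ℚ :=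
  (cells p).val.map fun c => ((hook p c : ℚ)) ^ 2

/-- The multiset of shifted parts `{λ_i + n - i : 1 ≤ i ≤ n}` of `p`. -/
def shiftedParts {n : ℕ} (p : Nat.Partition n) : Multiset ℚ :=
  (Finset.range n).val.map fun i => (partFun p i : ℚ) + (n : ℚ) - 1 - (i : ℚ)

/-- The number of cycles of a permutation, counting fixed points as cycles. -/
def cycleCount {n : ℕ} (w : Equiv.Perm (Fin n)) : ℕ :=
  w.cycleType.card + (Finset.univ.filter fun x => w x = x).card

/-- The number of fixed points of a permutation. -/
def fixedPointCount {n : ℕ} (w : Equiv.Perm (Fin n)) : ℕ :=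
  (Finset.univ.filter fun x => w x = x).card



/-!
Let `β_i = λ_i + n - 1 - i` (`i < n`, 0-indexed) be the β-numbers of `λ` and
`γ_j = n + j - λ'_j` the complementary numbers, so that the hook length of the cell `(i, j)`
is `β_i - γ_j`. Fix a prime power `q` and an integer `v`. In row `i`, the numbers `β_i - γ_j`
divisible by `q` and the numbers `β_i - β_k` with `β_k < β_i`, `β_k ≡ β_i (mod q)` are distinct
positive multiples of `q` at most `β_i`, so their number is at most `β_i / q`. Summing over the rows
and using that the β-numbers have total weight `∑ β_i - (0 + ⋯ + (n-1)) = n`, one finds that at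
most `#{i | β_i ≡ -v (mod q)}` hook lengths are divisible by `q`, which is the number of factors
`v + β_i` divisible by `q`. Comparing these counts for every prime power gives `H_λ ∣ ∏ (v + β_i)`.
-/

theorem Nat.factorization_prod_eq_sum_card_filter_pow_dvd {ι : Type*} {s : Finset ι}
    {f : ι → ℕ} (hf : ∀ i ∈ s, f i ≠ 0) {ℓ K : ℕ} (hℓ : ℓ.Prime) (hK : ∀ i ∈ s, f i ≤ ℓ ^ K) :
    (∏ i ∈ s, f i).factorization ℓ = ∑ k ∈ Icc 1 K, #{i ∈ s | ℓ ^ k ∣ f i} := by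
  rw [Nat.factorization_prod hf, Finset.sum_apply']
  simp_rw [card_filter]
  rw [sum_comm]
  refine sum_congr rfl fun i hi => ?_
  rw [Nat.factorization_eq_card_pow_dvd _ hℓ, Nat.Ico_filter_pow_dvd_eq hℓ (hf i hi) (hK i hi),
    card_filter]

theorem Nat.prod_dvd_prod_of_card_filter_pow_dvd_le {ι κ : Type*} {s : Finset ι} {t : Finset κ}
    {f : ι → ℕ} {g : κ → ℕ} (hf : ∀ i ∈ s, f i ≠ 0)
    (h : ∀ ℓ k, ℓ.Prime → 0 < k → #{i ∈ s | ℓ ^ k ∣ f i} ≤ #{j ∈ t | ℓ ^ k ∣ g j}) :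
    ∏ i ∈ s, f i ∣ ∏ j ∈ t, g j := by
  by_cases hg : ∃ j ∈ t, g j = 0
  · obtain ⟨j, hj, hgj⟩ := hg
    rw [prod_eq_zero hj hgj]
    exact dvd_zero _
  push Not at hg
  have hF : ∏ i ∈ s, f i ≠ 0 := prod_ne_zero_iff.mpr hf
  have hG : ∏ j ∈ t, g j ≠ 0 := prod_ne_zero_iff.mpr hg
  rw [← Nat.factorization_le_iff_dvd hF hG]
  intro ℓ
  by_cases hℓ : ℓ.Prime
  swap
  · simp [Nat.factorization_eq_zero_of_not_prime _ hℓ]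
  set K := ∏ i ∈ s, f i + ∏ j ∈ t, g j
  have hK : K ≤ ℓ ^ K := (Nat.lt_pow_self hℓ.one_lt).le
  rw [Nat.factorization_prod_eq_sum_card_filter_pow_dvd hf hℓ fun i hi =>
      ((Nat.le_of_dvd (Nat.pos_of_ne_zero hF) (dvd_prod_of_mem f hi)).trans (by omega)).trans hK,
    Nat.factorization_prod_eq_sum_card_filter_pow_dvd hg hℓ fun j hj =>
      ((Nat.le_of_dvd (Nat.pos_of_ne_zero hG) (dvd_prod_of_mem g hj)).trans (by omega)).trans hK]
  exact sum_le_sum fun k hk => h ℓ k hℓ (mem_Icc.mp hk).1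

theorem Int.natCast_dvd_add_natCast_iff_mod_eq_natMod {q : ℕ} (hq : 0 < q) (b : ℕ) (v : ℤ) :
    (q : ℤ) ∣ v + b ↔ b % q = (-v).natMod q := by
  rw [Int.natMod, ← Int.natCast_inj, Int.natCast_mod,
    Int.toNat_of_nonneg (Int.emod_nonneg _ (by omega)), ← Int.ModEq, Int.modEq_iff_dvd, ← dvd_neg]
  ring_nf

theorem Finset.sum_range_card_le_sum (S : Finset ℕ) : ∑ t ∈ range #S, t ≤ ∑ x ∈ S, x := by
  have := Finset.sum_range_le_sum (s := S.map Nat.castEmbedding) (c := (0 : ℤ)) (by simp)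
  simp only [card_map, zero_add, sum_map, Nat.castEmbedding_apply] at this
  rwa [← Nat.cast_sum, ← Nat.cast_sum, Nat.cast_le] at this

theorem Finset.card_le_div_of_forall_dvd_sub {S : Finset ℕ} {b q : ℕ}
    (hS : ∀ x ∈ S, x < b ∧ q ∣ b - x) : #S ≤ b / q := by
  rcases Nat.eq_zero_or_pos q with rfl | hq
  · simp only [Nat.div_zero, Nat.le_zero, card_eq_zero, eq_empty_iff_forall_notMem]
    intro x hx
    have := hS x hx
    simp only [zero_dvd_iff] at this
    omega
  calc #S = #(S.image fun x => (b - x) / q) := by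
        refine (card_image_of_injOn fun x hx y hy hxy => ?_).symm
        have := Nat.div_mul_cancel (hS x hx).2
        have := Nat.div_mul_cancel (hS y hy).2
        have := (hS x hx).1
        have := (hS y hy).1
        rw [hxy] at *
        omega
    _ ≤ #(Icc 1 (b / q)) := by
        refine card_le_card fun t ht => ?_
        obtain ⟨x, hx, rfl⟩ := mem_image.mp ht
        obtain ⟨hxb, hqx⟩ := hS x hx
        rw [mem_Icc, Nat.one_le_div_iff hq]
        exact ⟨Nat.le_of_dvd (by omega) hqx, Nat.div_le_div_right (Nat.sub_le b x)⟩
    _ = b / q := Nat.card_Icc 1 (b / q)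

section RankInClass

variable {ι : Type*} (s : Finset ι) (B : ι → ℕ) (q : ℕ)

def rankInClass (i : ι) : ℕ := #{k ∈ s | B k < B i ∧ B k ≡ B i [MOD q]}

variable {s B q}

theorem rankInClass_lt_of_lt {i k : ι} (hk : k ∈ s) (hlt : B k < B i)
    (hmod : B k ≡ B i [MOD q]) : rankInClass s B q k < rankInClass s B q i := by
  refine card_lt_card ⟨fun l hl => ?_, fun hsub => ?_⟩
  · rw [mem_filter] at hl ⊢
    exact ⟨hl.1, hl.2.1.trans hlt, hl.2.2.trans hmod⟩
  · simpa using (mem_filter.mp (hsub (mem_filter.mpr ⟨hk, hlt, hmod⟩))).2.1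

theorem rankInClass_lt_card {i : ι} (hi : i ∈ s) :
    rankInClass s B q i < #{k ∈ s | B k % q = B i % q} := by
  refine card_lt_card ⟨fun l hl => ?_, fun hsub => ?_⟩
  · rw [mem_filter] at hl ⊢
    exact ⟨hl.1, hl.2.2⟩
  · simpa using (mem_filter.mp (hsub (mem_filter.mpr ⟨hi, rfl⟩))).2.1

theorem injOn_mod_add_mul_rankInClass (hq : 0 < q) (hB : Set.InjOn B s) :
    Set.InjOn (fun i => B i % q + q * rankInClass s B q i) s := by
  intro i hi j hj hij
  have hmod : B i ≡ B j [MOD q] := by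
    unfold Nat.ModEq
    simpa [Nat.add_mul_mod_self_left, Nat.mod_mod] using congrArg (· % q) hij
  have hrank : rankInClass s B q i = rankInClass s B q j :=
    Nat.eq_of_mul_eq_mul_left hq (by simp only at hij; unfold Nat.ModEq at hmod; omega)
  by_contra hne
  rcases lt_or_gt_of_ne (hB.ne hi hj hne) with hlt | hlt
  · exact (rankInClass_lt_of_lt hi hlt hmod).ne hrank
  · exact (rankInClass_lt_of_lt hj hlt hmod.symm).ne' hrank

theorem sum_le_card_filter_mod_eq (hq : 0 < q) {r : ℕ} (hr : r < q) (hB : Set.InjOn B s)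
    (hweight : ∑ i ∈ s, B i ≤ #s + ∑ t ∈ range #s, t) {N : ι → ℕ}
    (hN : ∀ i ∈ s, N i + rankInClass s B q i ≤ B i / q) :
    ∑ i ∈ s, N i ≤ #{i ∈ s | B i % q = r} := by
  set c := #{i ∈ s | B i % q = r}
  set φ := fun i => B i % q + q * rankInClass s B q i
  -- The `φ i` are distinct and miss `r + q * c`, so together they sum to at least
  -- `0 + 1 + ⋯ + #s`; on the other hand `q * N i + φ i ≤ B i`.
  have hφ : Set.InjOn φ s := injOn_mod_add_mul_rankInClass hq hB
  have hfresh : r + q * c ∉ s.image φ := by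
    rw [mem_image]
    rintro ⟨i, hi, hφi⟩
    have hmod : B i % q = r := by
      simpa [φ, Nat.add_mul_mod_self_left, Nat.mod_eq_of_lt hr] using congrArg (· % q) hφi
    have hrank : rankInClass s B q i = c :=
      Nat.eq_of_mul_eq_mul_left hq (by simp only [φ] at hφi; omega)
    have hlt := rankInClass_lt_card (B := B) (q := q) hi
    rw [hmod] at hlt
    exact hlt.ne hrank
  have hlow : ∑ t ∈ range (#s + 1), t ≤ r + q * c + ∑ i ∈ s, φ i := by
    have := sum_range_card_le_sum (insert (r + q * c) (s.image φ))
    rwa [card_insert_of_notMem hfresh, card_image_of_injOn hφ, sum_insert hfresh,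
      sum_image hφ] at this
  have hrow : ∀ i ∈ s, q * N i + φ i ≤ B i := by
    intro i hi
    have h1 := Nat.mul_le_mul_left q (hN i hi)
    have h2 := Nat.div_add_mod (B i) q
    rw [mul_add] at h1
    simp only [φ]
    omega
  have hup : q * ∑ i ∈ s, N i + ∑ i ∈ s, φ i ≤ ∑ i ∈ s, B i := by
    rw [mul_sum, ← sum_add_distrib]
    exact sum_le_sum hrow
  rw [sum_range_succ] at hlow
  have : q * ∑ i ∈ s, N i < q * (c + 1) := by rw [mul_add]; omega
  exact Nat.lt_succ_iff.mp (Nat.lt_of_mul_lt_mul_left this)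

end RankInClass

theorem List.sum_range_getD {l : List ℕ} {m : ℕ} (h : l.length ≤ m) :
    ∑ i ∈ Finset.range m, l.getD i 0 = l.sum := by
  induction l generalizing m with
  | nil => simp
  | cons a l ih =>
    obtain ⟨m, rfl⟩ : ∃ k, m = k + 1 := ⟨m - 1, by simp only [List.length_cons] at h; omega⟩
    rw [Finset.sum_range_succ', List.sum_cons, ← ih (by simpa using h)]
    simp [add_comm]

section Partition

variable {n : ℕ} (p : Nat.Partition n)

theorem partFun_antitone : Antitone (partFun p) := by
  intro i j hij
  unfold partFun
  set l := p.parts.sort (· ≥ ·)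
  by_cases hj : j < l.length
  · rw [List.getD_eq_getElem _ _ hj, List.getD_eq_getElem _ _ (hij.trans_lt hj)]
    rcases hij.eq_or_lt with rfl | hlt
    · rfl
    · exact (p.parts.pairwise_sort _).rel_get_of_lt (a := ⟨i, hij.trans_lt hj⟩) (b := ⟨j, hj⟩) hlt
  · rw [List.getD_eq_default _ _ (not_lt.mp hj)]
    exact Nat.zero_le _

theorem partFun_le (i : ℕ) : partFun p i ≤ n := by
  unfold partFun
  set l := p.parts.sort (· ≥ ·)
  by_cases hi : i < l.length
  · rw [List.getD_eq_getElem _ _ hi, ← p.parts_sum]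
    exact Multiset.le_sum_of_mem ((Multiset.mem_sort _).mp (List.getElem_mem hi))
  · rw [List.getD_eq_default _ _ (not_lt.mp hi)]
    exact Nat.zero_le _

theorem sum_range_partFun : ∑ i ∈ range n, partFun p i = n := by
  have hlen : (p.parts.sort (· ≥ ·)).length ≤ n := by
    calc (p.parts.sort (· ≥ ·)).length = p.parts.card • 1 := by simp
      _ ≤ p.parts.sum := Multiset.card_nsmul_le_sum fun _ hx => p.parts_pos hx
      _ = n := p.parts_sum
  unfold partFun
  rw [List.sum_range_getD hlen, ← Multiset.sum_coe, Multiset.sort_eq, p.parts_sum]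

theorem mem_cells {i j : ℕ} : (i, j) ∈ cells p ↔ i < n ∧ j < partFun p i := by
  simp only [cells, mem_filter, mem_product, mem_range]
  have := partFun_le p i
  omega

theorem card_filter_cells (P : ℕ × ℕ → Prop) [DecidablePred P] :
    #{c ∈ cells p | P c} = ∑ i ∈ range n, #{j ∈ range (partFun p i) | P (i, j)} := by
  rw [card_filter, cells, sum_filter, sum_product]
  refine sum_congr rfl fun i _ => ?_
  rw [card_filter, ← sum_filter]
  congr 1
  ext j
  simp only [mem_filter, mem_range]
  have := partFun_le p i
  omega

theorem lt_conjFun_iff {i j : ℕ} : i < conjFun p j ↔ i < n ∧ j < partFun p i := by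
  constructor
  · intro h
    by_contra hcell
    have hsub : {k ∈ range n | j < partFun p k} ⊆ range i := fun k hk => by
      rw [mem_filter, mem_range] at hk
      rw [mem_range]
      by_contra hik
      exact hcell ⟨by omega, hk.2.trans_le (partFun_antitone p (not_lt.mp hik))⟩
    exact ((card_le_card hsub).trans_eq (card_range i)).not_gt h
  · rintro ⟨hi, hj⟩
    have hsub : range (i + 1) ⊆ {k ∈ range n | j < partFun p k} := fun k hk => by
      rw [mem_range] at hk
      rw [mem_filter, mem_range]
      exact ⟨by omega, hj.trans_le (partFun_antitone p (by omega))⟩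
    simpa [conjFun] using card_le_card hsub

theorem conjFun_le (j : ℕ) : conjFun p j ≤ n :=
  (card_filter_le _ _).trans (card_range n).le

theorem conjFun_antitone : Antitone (conjFun p) := fun _ _ hjj' =>
  card_le_card (monotone_filter_right _ fun _ _ h => hjj'.trans_lt h)

def betaNumber (i : ℕ) : ℕ := partFun p i + (n - 1 - i)

def coBetaNumber (j : ℕ) : ℕ := n + j - conjFun p j

theorem betaNumber_strictAntiOn : StrictAntiOn (betaNumber p) (Set.Iio n) := by
  intro i _ j hj hij
  have := partFun_antitone p hij.le
  simp only [Set.mem_Iio] at hj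
  unfold betaNumber
  omega

theorem coBetaNumber_strictMono : StrictMono (coBetaNumber p) := by
  intro j j' hjj'
  have := conjFun_antitone p hjj'.le
  have := conjFun_le p j
  unfold coBetaNumber
  omega

theorem betaNumber_ne_coBetaNumber {i : ℕ} (hi : i < n) (j : ℕ) :
    betaNumber p i ≠ coBetaNumber p j := by
  have := conjFun_le p j
  have := lt_conjFun_iff p (i := i) (j := j)
  unfold betaNumber coBetaNumber
  omega

theorem coBetaNumber_lt_betaNumber {i j : ℕ} (hc : (i, j) ∈ cells p) :
    coBetaNumber p j < betaNumber p i := by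
  have hcell := (mem_cells p).mp hc
  have := (lt_conjFun_iff p).mpr hcell
  have := conjFun_le p j
  unfold betaNumber coBetaNumber
  omega

theorem hook_eq_betaNumber_sub_coBetaNumber {i j : ℕ} (hc : (i, j) ∈ cells p) :
    hook p (i, j) = betaNumber p i - coBetaNumber p j := by
  have hcell := (mem_cells p).mp hc
  have := (lt_conjFun_iff p).mpr hcell
  have := conjFun_le p j
  unfold hook betaNumber coBetaNumber
  dsimp only
  omega

theorem hook_pos {c : ℕ × ℕ} (hc : c ∈ cells p) : 0 < hook p c := by
  obtain ⟨i, j⟩ := c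
  rw [hook_eq_betaNumber_sub_coBetaNumber p hc]
  exact Nat.sub_pos_of_lt (coBetaNumber_lt_betaNumber p hc)

theorem sum_range_betaNumber : ∑ i ∈ range n, betaNumber p i = n + ∑ i ∈ range n, i := by
  simp only [betaNumber]
  rw [sum_add_distrib, sum_range_partFun, sum_range_reflect (fun i => i) n]

theorem natCast_betaNumber {i : ℕ} (hi : i < n) :
    (betaNumber p i : ℤ) = partFun p i + n - 1 - i := by
  unfold betaNumber
  omega

theorem card_filter_dvd_hook_add_rankInClass_le (q : ℕ) {i : ℕ} (hi : i < n) :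
    #{j ∈ range (partFun p i) | q ∣ hook p (i, j)} + rankInClass (range n) (betaNumber p) q i
      ≤ betaNumber p i / q := by
  set rowHooks := {j ∈ range (partFun p i) | q ∣ hook p (i, j)}
  set lowerBeads := {k ∈ range n | betaNumber p k < betaNumber p i ∧
    betaNumber p k ≡ betaNumber p i [MOD q]}
  have hcell : ∀ j ∈ rowHooks, (i, j) ∈ cells p := fun j hj =>
    (mem_cells p).mpr ⟨hi, mem_range.mp (mem_filter.mp hj).1⟩
  have hrow : #(rowHooks.image (coBetaNumber p)) = #rowHooks :=
    card_image_of_injective _ (coBetaNumber_strictMono p).injective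
  have hlower : #(lowerBeads.image (betaNumber p)) = #lowerBeads :=
    card_image_of_injOn ((betaNumber_strictAntiOn p).injOn.mono fun k hk =>
      mem_range.mp (mem_filter.mp hk).1)
  have hdisj : Disjoint (rowHooks.image (coBetaNumber p)) (lowerBeads.image (betaNumber p)) := by
    rw [disjoint_left]
    intro x hx hx'
    obtain ⟨j, -, hj⟩ := mem_image.mp hx
    obtain ⟨k, hk, rfl⟩ := mem_image.mp hx'
    exact betaNumber_ne_coBetaNumber p (mem_range.mp (mem_filter.mp hk).1) j hj.symm
  rw [rankInClass, ← hrow, ← hlower, ← card_union_of_disjoint hdisj]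
  refine card_le_div_of_forall_dvd_sub fun x hx => ?_
  rcases mem_union.mp hx with hx | hx
  · obtain ⟨j, hj, rfl⟩ := mem_image.mp hx
    refine ⟨coBetaNumber_lt_betaNumber p (hcell j hj), ?_⟩
    rw [← hook_eq_betaNumber_sub_coBetaNumber p (hcell j hj)]
    exact (mem_filter.mp hj).2
  · obtain ⟨k, hk, rfl⟩ := mem_image.mp hx
    obtain ⟨-, hlt, hmod⟩ := mem_filter.mp hk
    exact ⟨hlt, (Nat.modEq_iff_dvd' hlt.le).mp hmod⟩

theorem card_filter_dvd_hook_le {q : ℕ} (hq : 0 < q) (v : ℤ) :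
    #{c ∈ cells p | q ∣ hook p c} ≤ #{i ∈ range n | (q : ℤ) ∣ v + betaNumber p i} := by
  rw [filter_congr fun i _ => Int.natCast_dvd_add_natCast_iff_mod_eq_natMod hq (betaNumber p i) v,
    card_filter_cells]
  refine sum_le_card_filter_mod_eq hq (Int.natMod_lt hq.ne') ?_ ?_ fun i hi =>
    card_filter_dvd_hook_add_rankInClass_le p q (mem_range.mp hi)
  · exact (betaNumber_strictAntiOn p).injOn.mono fun i hi => mem_range.mp hi
  · rw [sum_range_betaNumber, card_range]

end Partition

/-- For `λ ⊢ n` and every integer `v`,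
`A_λ(v) = (∏_{i=1}^n (v + λ_i + n - i)) / H_λ` is an integer. -/
theorem stmt7 (n : ℕ) (p : Nat.Partition n) (v : ℤ) :
    (∏ c ∈ cells p, (hook p c : ℤ)) ∣
      ∏ i ∈ Finset.range n, (v + (partFun p i : ℤ) + (n : ℤ) - 1 - (i : ℤ)) := by
  have hbeta : ∀ i ∈ range n, v + (partFun p i : ℤ) + n - 1 - i = v + betaNumber p i :=
    fun i hi => by rw [natCast_betaNumber p (mem_range.mp hi)]; ring
  rw [prod_congr rfl hbeta, ← Nat.cast_prod, Int.natCast_dvd, ← Int.natAbsHom_apply, map_prod]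
  refine Nat.prod_dvd_prod_of_card_filter_pow_dvd_le (fun c hc => (hook_pos p hc).ne')
    fun ℓ k hℓ _ => ?_
  simp_rw [Int.natAbsHom_apply, ← Int.natCast_dvd]
  exact card_filter_dvd_hook_le p (pow_pos hℓ.pos k) v
end

section
/- Let λ = (λ_1,…,λ_n) be a partition of n (with trailing zeros so that it has exactly n parts). Then the following two multisets are equal: {h_u : u ∈ λ} ∪ {λ_i − λ_j − i + j : 1 ≤ i < j ≤ n} and {n + c_u : u ∈ λ} ∪ {1 with multiplicity n−1, 2 with multiplicity n−2, …, n−1 with multiplicity 1}, where ∪ denotes multiset union. -/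
open Finset Polynomial

/-!
Both sides split row by row. Write `L = λ_i + n - 1 - i` for the `i`-th shifted part (rows
0-indexed). In row `i` the hooks are `L - (n + j - λ'_j)` for `j < λ_i`, and the terms of the
second family are `L - L_k` for `k > i`; these are `λ_i + (n - 1 - i)` distinct numbers in
`[1, L]`, hence all of them. On the other side, the numbers `n + c_u` of row `i` fill `[n - i, L]`,
and regrouping the staircase `{1^{n-1}, …, (n-1)^1}` by rows gives `[1, n - 1 - i]` in row `i`.
-/

theorem Multiset.add_eq_val_of_disjoint_of_card_le {α : Type*} {s t : Multiset α}
    {u : Finset α} (hs : s.Nodup) (ht : t.Nodup) (hst : Disjoint s t)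
    (hsu : ∀ x ∈ s, x ∈ u) (htu : ∀ x ∈ t, x ∈ u)
    (hcard : u.card ≤ Multiset.card s + Multiset.card t) : s + t = u.val := by
  refine Multiset.eq_of_le_of_card_le ?_ (by simpa using hcard)
  refine (Multiset.le_iff_subset (Multiset.nodup_add.2 ⟨hs, ht, hst⟩)).2 fun x hx => ?_
  rcases Multiset.mem_add.1 hx with hx | hx
  exacts [hsu x hx, htu x hx]

theorem Finset.filter_product_val_eq_bind {α β : Type*} (s : Finset α) (t : Finset β)
    (q : α → β → Prop) [∀ a, DecidablePred (q a)] :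
    ((s ×ˢ t).filter fun c => q c.1 c.2).val
      = s.val.bind fun a => (t.filter (q a)).val.map (Prod.mk a) := by
  change Multiset.filter _ (s.val.bind fun a => t.val.map (Prod.mk a)) = _
  rw [Multiset.filter_bind]
  exact Multiset.bind_congr fun a _ => Multiset.filter_map _ _ _

theorem staircase_eq_bind (n : ℕ) :
    (range n).val.bind (fun l => Multiset.replicate (n - 1 - l) ((l : ℤ) + 1))
      = (range n).val.bind fun i => (range (n - 1 - i)).val.map fun m : ℕ => (m : ℤ) + 1 := by
  have hrep : ∀ l : ℕ, Multiset.replicate (n - 1 - l) ((l : ℤ) + 1)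
      = ∑ _m ∈ range (n - 1 - l), {(l : ℤ) + 1} := by
    simp [Multiset.nsmul_singleton]
  have hmap : ∀ i : ℕ, (range (n - 1 - i)).val.map (fun m : ℕ => (m : ℤ) + 1)
      = ∑ m ∈ range (n - 1 - i), {(m : ℤ) + 1} := by
    intro i; rw [← Multiset.bind_singleton (f := fun m : ℕ => (m : ℤ) + 1)]; rfl
  change ∑ l ∈ range n, _ = ∑ i ∈ range n, _
  simp_rw [hrep, hmap]
  exact Finset.sum_comm' fun l m => by simp only [mem_range]; omega

section Partition

variable {n : ℕ} (p : Nat.Partition n)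

theorem lt_partFun_iff_lt_conjFun {j k : ℕ} (hk : k < n) :
    j < partFun p k ↔ k < conjFun p j := by
  constructor
  · intro h
    have hsub : range (k + 1) ⊆ (range n).filter (j < partFun p ·) := fun m hm => by
      rw [mem_range, Nat.lt_succ_iff] at hm
      exact mem_filter.2 ⟨mem_range.2 (hm.trans_lt hk), h.trans_le (partFun_antitone p hm)⟩
    simpa [conjFun] using card_le_card hsub
  · intro h
    by_contra! hjk
    have hsub : (range n).filter (j < partFun p ·) ⊆ range k := fun m hm => by
      rw [mem_filter] at hm
      by_contra hmk
      exact (partFun_antitone p (not_lt.mp (mem_range.not.mp hmk))).not_gt (hm.2.trans_le' hjk)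
    simpa [conjFun] using (card_le_card hsub).trans_lt' h

theorem hook_eq {i j : ℕ} (hi : i < n) (hj : j < partFun p i) :
    (hook p (i, j) : ℤ) = partFun p i - j + conjFun p j - i - 1 := by
  have := (lt_partFun_iff_lt_conjFun p hi).mp hj
  simp only [hook]
  omega

theorem cells_val_eq_bind :
    (cells p).val = (range n).val.bind fun i => (range (partFun p i)).val.map (Prod.mk i) := by
  rw [cells, Finset.filter_product_val_eq_bind (q := fun i j => j < partFun p i)]
  refine Multiset.bind_congr fun i _ => ?_
  congr 2
  ext j
  simp only [mem_filter, mem_range]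
  have := partFun_le p i
  omega

theorem hook_row_strictAntiOn {i : ℕ} (hi : i < n) :
    StrictAntiOn (fun j => (hook p (i, j) : ℤ)) (Set.Iio (partFun p i)) := by
  intro j hj j' hj' hjj'
  have := conjFun_antitone p hjj'.le
  simp only [hook_eq p hi hj, hook_eq p hi hj']
  omega

-- The hook at `(i, j)` exceeds the gap `L_i - L_k` exactly when `j < λ_k`.
theorem hook_ne_row_gap {i j k : ℕ} (hj : j < partFun p i) (hik : i < k) (hk : k < n) :
    (hook p (i, j) : ℤ) ≠ partFun p i - partFun p k - i + k := by
  rw [hook_eq p (hik.trans hk) hj]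
  by_cases hjk : j < partFun p k
  · have := (lt_partFun_iff_lt_conjFun p hk).mp hjk
    omega
  · have := (lt_partFun_iff_lt_conjFun p hk).not.mp hjk
    omega

theorem hooks_row_add_gaps_eq_Icc {i : ℕ} (hi : i < n) :
    (range (partFun p i)).val.map (fun j => (hook p (i, j) : ℤ)) +
        ((range n).filter (i < ·)).val.map
          (fun k => (partFun p i : ℤ) - partFun p k - i + k)
      = (Icc 1 ((partFun p i : ℤ) + n - 1 - i)).val := by
  refine Multiset.add_eq_val_of_disjoint_of_card_le ?_ ?_ ?_ ?_ ?_ ?_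
  · exact (nodup _).map_on fun x hx y hy h =>
      (hook_row_strictAntiOn p hi).injOn (by simpa using hx) (by simpa using hy) h
  · refine (nodup _).map (StrictMono.injective fun k k' hkk' => ?_)
    have := partFun_antitone p hkk'.le
    omega
  · rw [Multiset.disjoint_left]
    simp only [Multiset.mem_map, Finset.mem_val, mem_range, mem_filter]
    rintro _ ⟨j, hj, rfl⟩ ⟨k, ⟨hk, hik⟩, hjk⟩
    exact hook_ne_row_gap p hj hik hk hjk.symm
  · simp only [Multiset.mem_map, Finset.mem_val, mem_range, mem_Icc]
    rintro _ ⟨j, hj, rfl⟩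
    have := (lt_partFun_iff_lt_conjFun p hi).mp hj
    have := conjFun_le p j
    rw [hook_eq p hi hj]
    omega
  · simp only [Multiset.mem_map, Finset.mem_val, mem_range, mem_Icc, mem_filter]
    rintro _ ⟨k, ⟨hk, hik⟩, rfl⟩
    have := partFun_antitone p hik.le
    omega
  · have : (range n).filter (i < ·) = Ioo i n := by
      ext k
      simp only [mem_filter, mem_range, mem_Ioo]
      omega
    simp only [Multiset.card_map, card_val, card_range, this, Nat.card_Ioo, Int.card_Icc]
    omega

theorem contents_row_add_staircase_eq_Icc {i : ℕ} (hi : i < n) :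
    (range (partFun p i)).val.map (fun j => (n : ℤ) + cellContent (i, j)) +
        (range (n - 1 - i)).val.map (fun m : ℕ => (m : ℤ) + 1)
      = (Icc 1 ((partFun p i : ℤ) + n - 1 - i)).val := by
  refine Multiset.add_eq_val_of_disjoint_of_card_le ?_ ?_ ?_ ?_ ?_ ?_
  · exact (nodup _).map fun j j' h => by simpa [cellContent] using h
  · exact (nodup _).map fun m m' h => by simpa using h
  · rw [Multiset.disjoint_left]
    simp only [Multiset.mem_map, Finset.mem_val, mem_range, cellContent]
    rintro _ ⟨j, hj, rfl⟩ ⟨m, hm, hjm⟩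
    omega
  · simp only [Multiset.mem_map, Finset.mem_val, mem_range, mem_Icc, cellContent]
    rintro _ ⟨j, hj, rfl⟩
    omega
  · simp only [Multiset.mem_map, Finset.mem_val, mem_range, mem_Icc]
    rintro _ ⟨m, hm, rfl⟩
    omega
  · simp only [Multiset.card_map, card_val, card_range, Int.card_Icc]
    omega

end Partition

/-- For `λ ⊢ n`, the multiset equality
`{h_u : u ∈ λ} ∪ {λ_i - λ_j - i + j : 1 ≤ i < j ≤ n}`
`= {n + c_u : u ∈ λ} ∪ {1^{n-1}, 2^{n-2}, …, (n-1)^1}` holds. -/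
theorem stmt12 (n : ℕ) (p : Nat.Partition n) :
    (cells p).val.map (fun c => (hook p c : ℤ)) +
      (((Finset.range n ×ˢ Finset.range n).filter fun q => q.1 < q.2).val.map
        fun q => (partFun p q.1 : ℤ) - (partFun p q.2 : ℤ) - (q.1 : ℤ) + (q.2 : ℤ))
    = (cells p).val.map (fun c => (n : ℤ) + cellContent c) +
      (Finset.range n).val.bind
        (fun l => Multiset.replicate (n - 1 - l) ((l : ℤ) + 1)) := by
  rw [cells_val_eq_bind, Finset.filter_product_val_eq_bind (q := (· < ·)), staircase_eq_bind]
  simp only [Multiset.map_bind, Multiset.map_map, Function.comp_def, ← Multiset.bind_add]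
  refine Multiset.bind_congr fun i hi => ?_
  have hi : i < n := by simpa using hi
  rw [hooks_row_add_gaps_eq_Icc p hi, contents_row_add_staircase_eq_Icc p hi]
end

section
/- For every partition μ = (μ_1,…,μ_k) there exists a polynomial P ∈ ℚ[x] such that for all n ≥ 1, Π_{h=1}^k e_{μ_h}(D_n) = P(n), where D_n is the multiset containing i with multiplicity n − i for each 1 ≤ i ≤ n − 1 (so D_n = {1^{n−1}, 2^{n−2}, …, (n−1)^1}). (Consequently, F(1^{n−1}, 2^{n−2}, …, n−1) is a polynomial function of n for every symmetric function F over ℚ.) -/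
/-
The power sums of `D_n` are `p_j(D_n) = ∑_{l=1}^{n} (n - l) l^j = n S_j(n) - S_{j+1}(n)`, where
`S_j(n) = ∑_{l=1}^{n} l^j` is a polynomial in `n` by Faulhaber's formula (Bernoulli polynomials).
Over `ℚ`, Newton's identities express each `e_k` as a polynomial in the power sums, so each
`e_k(D_n)`, and hence each product `e_μ(D_n)`, is a polynomial in `n`.
-/

open Finset Polynomial

/-- The multiset `D_n = {1^{n-1}, 2^{n-2}, …, (n-1)^1}` in which `i` occurs with
multiplicity `n - i`. -/
def Dn (n : ℕ) : Multiset ℚ :=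
  (Finset.range n).val.bind fun l => Multiset.replicate (n - 1 - l) ((l : ℚ) + 1)

theorem Multiset.mul_esymm_eq_sum {R : Type*} [CommRing R] (s : Multiset R) (k : ℕ) :
    k * s.esymm k = (-1) ^ (k + 1) *
      ∑ a ∈ HasAntidiagonal.antidiagonal k with a.1 < k,
        (-1) ^ a.1 * s.esymm a.1 * (s.map (· ^ a.2)).sum := by
  classical
  have hpsum (j : ℕ) :
      MvPolynomial.aeval (fun x : s => (x : R)) (MvPolynomial.psum s R j) =
        (s.map (· ^ j)).sum := by
    rw [MvPolynomial.psum, map_sum]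
    simp only [map_pow, MvPolynomial.aeval_X]
    exact Multiset.map_univ s (· ^ j) ▸ rfl
  have h := congrArg (MvPolynomial.aeval fun x : s => (x : R))
    (MvPolynomial.mul_esymm_eq_sum s R k)
  simpa only [map_mul, map_natCast, map_sum, map_pow, map_neg, map_one,
    MvPolynomial.aeval_esymm_eq_multiset_esymm, Multiset.map_univ_coe, hpsum] using h

/-- Newton's identities solve for `e_k` in terms of the `e_j`, `j < k`, and power sums once `k`
is invertible. -/
theorem Subalgebra.esymm_mem_of_powerSum_mem {K ι : Type*} [Field K] [CharZero K]
    (A : Subalgebra K (ι → K)) (s : ι → Multiset K)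
    (hs : ∀ j, (fun i => ((s i).map (· ^ j)).sum) ∈ A) (k : ℕ) :
    (fun i => (s i).esymm k) ∈ A := by
  induction k using Nat.strong_induction_on with
  | _ k ih =>
    rcases Nat.eq_zero_or_pos k with rfl | hk
    · convert A.one_mem
      simp [Multiset.esymm]
    have hsum := A.sum_mem fun (a : ℕ × ℕ) (ha : a ∈ {a ∈ antidiagonal k | a.1 < k}) =>
      A.mul_mem (A.smul_mem (ih a.1 (Finset.mem_filter.1 ha).2) ((-1 : K) ^ a.1)) (hs a.2)
    convert A.smul_mem hsum ((k : K)⁻¹ * (-1) ^ (k + 1)) using 1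
    funext i
    have hk' : (k : K) ≠ 0 := Nat.cast_ne_zero.2 hk.ne'
    simp only [Pi.smul_apply, Finset.sum_apply, Pi.mul_apply, smul_eq_mul]
    rw [mul_assoc, ← Multiset.mul_esymm_eq_sum (s i) k, inv_mul_cancel_left₀ hk']

noncomputable def polyFunOnNat : Subalgebra ℚ (ℕ → ℚ) := (aeval fun n : ℕ => (n : ℚ)).range

theorem mem_polyFunOnNat {f : ℕ → ℚ} :
    f ∈ polyFunOnNat ↔ ∃ P : ℚ[X], ∀ n, f n = P.eval (n : ℚ) := by
  simp only [polyFunOnNat, AlgHom.mem_range, aeval_pi_apply, coe_aeval_eq_eval, funext_iff,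
    eq_comm]

theorem natCast_mem_polyFunOnNat : (fun n : ℕ => (n : ℚ)) ∈ polyFunOnNat :=
  mem_polyFunOnNat.2 ⟨X, fun n => by simp⟩

theorem sum_range_pow_mem_polyFunOnNat (p : ℕ) :
    (fun n => ∑ l ∈ range n, (l : ℚ) ^ p) ∈ polyFunOnNat :=
  mem_polyFunOnNat.2
    ⟨C (p + 1 : ℚ)⁻¹ * (Polynomial.bernoulli p.succ - C (_root_.bernoulli p.succ)), fun n => by
      rw [eval_mul, eval_C, eval_sub, eval_C, ← sum_range_pow_eq_bernoulli_sub,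
        inv_mul_cancel_left₀ (by positivity)]⟩

theorem sum_range_succ_pow_mem_polyFunOnNat (p : ℕ) :
    (fun n => ∑ l ∈ range n, ((l : ℚ) + 1) ^ p) ∈ polyFunOnNat := by
  have h : (fun n => ∑ l ∈ range n, ((l : ℚ) + 1) ^ p) =
      fun n => ∑ l ∈ range n, (l : ℚ) ^ p + (n : ℚ) ^ p - 0 ^ p := by
    funext n
    have := (sum_range_succ (fun l => (l : ℚ) ^ p) n).symm.trans
      (sum_range_succ' (fun l => (l : ℚ) ^ p) n)
    push_cast at this
    linear_combination -this
  rw [h]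
  exact sub_mem (add_mem (sum_range_pow_mem_polyFunOnNat p) (pow_mem natCast_mem_polyFunOnNat p))
    (polyFunOnNat.algebraMap_mem ((0 : ℚ) ^ p))

theorem sum_map_pow_Dn (n j : ℕ) :
    ((Dn n).map (· ^ j)).sum =
      n * ∑ l ∈ range n, ((l : ℚ) + 1) ^ j - ∑ l ∈ range n, ((l : ℚ) + 1) ^ (j + 1) := by
  simp only [Dn, Multiset.map_bind, Multiset.sum_bind, Multiset.map_replicate,
    Multiset.sum_replicate, nsmul_eq_mul, ← Finset.sum_eq_multiset_sum, Finset.mul_sum,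
    ← Finset.sum_sub_distrib]
  refine Finset.sum_congr rfl fun l hl => ?_
  rw [Nat.sub_sub, Nat.cast_sub (by simpa [Nat.add_comm] using Finset.mem_range.1 hl)]
  push_cast
  ring

theorem esymm_Dn_mem_polyFunOnNat (k : ℕ) : (fun n => (Dn n).esymm k) ∈ polyFunOnNat := by
  refine polyFunOnNat.esymm_mem_of_powerSum_mem Dn (fun j => ?_) k
  simp only [sum_map_pow_Dn]
  exact sub_mem (mul_mem natCast_mem_polyFunOnNat (sum_range_succ_pow_mem_polyFunOnNat j))
    (sum_range_succ_pow_mem_polyFunOnNat (j + 1))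

theorem stmt13_general (k : ℕ) (μ : Fin k → ℕ) :
    ∃ P : Polynomial ℚ, ∀ n : ℕ, 1 ≤ n →
      ∏ h : Fin k, Multiset.esymm (Dn n) (μ h) = P.eval (n : ℚ) := by
  have hmem : (fun n => ∏ h : Fin k, (Dn n).esymm (μ h)) ∈ polyFunOnNat := by
    rw [← Finset.prod_fn]
    exact prod_mem fun h _ => esymm_Dn_mem_polyFunOnNat (μ h)
  obtain ⟨P, hP⟩ := mem_polyFunOnNat.1 hmem
  exact ⟨P, fun n _ => hP n⟩

/-- For every partition `μ`, `e_μ(D_n)` is a polynomial function of `n`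
for `n ≥ 1`. -/
theorem stmt13 (k : ℕ) (μ : Fin k → ℕ) (hμ : ∀ i j : Fin k, i ≤ j → μ j ≤ μ i) :
    ∃ P : Polynomial ℚ, ∀ n : ℕ, 1 ≤ n →
      ∏ h : Fin k, Multiset.esymm (Dn n) (μ h) = P.eval (n : ℚ) :=
  stmt13_general k μ
end
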